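/- Let n ≥ 2, λ < -n/2, μ a finite positive Borel measure on S^{n-1}, and u the P_λ-Poisson integral of μ. Then for every unit vector ζ, r ↦ ((1-r)^(n-1)/(1+r)^(1+2λ)) · u(rζ) is increasing and r ↦ ((1+r)^(n-1)/(1-r)^(1+2λ)) · u(rζ) is decreasing on [0,1). -/

import Mathlib

/-!
For `x = r • ζ` the normalising factor combines with the kernel:
`(1 - r)^(n-1) / (1 + r)^(1+2λ) · P_λ(rζ, ξ) = ((1 - r) / |rζ - ξ|)^(n+2λ)`, and likewise
`(1 + r)^(n-1) / (1 - r)^(1+2λ) · P_λ(rζ, ξ) = ((1 + r) / |rζ - ξ|)^(n+2λ)`, because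
`1 - r² = (1 - r)(1 + r)`. Since `n + 2λ < 0`, it suffices that for every `ξ` on the sphere
`(1 - r) / |rζ - ξ|` decreases and `(1 + r) / |rζ - ξ|` increases in `r`. After squaring,
the difference of the two sides is `2 (s - r) (1 ∓ ⟪ζ, ξ⟫) (1 - r s) ≥ 0` for `0 ≤ r ≤ s ≤ 1`.
-/

open Real MeasureTheory Set
open scoped RealInnerProductSpace

lemma rpow_div_rpow_mul_mul_rpow_div_rpow {a b d : ℝ} (ha : 0 < a) (hb : 0 < b) (hd : 0 < d)
    (α β : ℝ) : a ^ α / b ^ β * ((a * b) ^ β / d ^ (α + β)) = (a / d) ^ (α + β) := by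
  rw [mul_rpow ha.le hb.le, div_rpow ha.le hd.le, rpow_add ha]
  field_simp

section IntegralMonotone

variable {ι X : Type*} [Preorder ι] [MeasurableSpace X] {μ : Measure X} {s : Set ι}
  {f : ι → X → ℝ}

theorem MeasureTheory.monotoneOn_integral (hf : ∀ i ∈ s, Integrable (f i) μ)
    (hmono : ∀ x, MonotoneOn (f · x) s) : MonotoneOn (fun i ↦ ∫ x, f i x ∂μ) s :=
  fun _ hi _ hj hij ↦ integral_mono (hf _ hi) (hf _ hj) fun x ↦ hmono x hi hj hij

theorem MeasureTheory.antitoneOn_integral (hf : ∀ i ∈ s, Integrable (f i) μ)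
    (hanti : ∀ x, AntitoneOn (f · x) s) : AntitoneOn (fun i ↦ ∫ x, f i x ∂μ) s :=
  fun _ hi _ hj hij ↦ integral_mono (hf _ hj) (hf _ hi) fun x ↦ hanti x hi hj hij

end IntegralMonotone

section UnitVectors

variable {E : Type*} [NormedAddCommGroup E] [InnerProductSpace ℝ E] {ζ ξ : E} {r s : ℝ}

lemma norm_smul_of_norm_eq_one (hζ : ‖ζ‖ = 1) (hr : 0 ≤ r) : ‖r • ζ‖ = r := by
  rw [norm_smul, hζ, mul_one, Real.norm_eq_abs, abs_of_nonneg hr]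

lemma norm_smul_sub_sq_of_norm_eq_one (hζ : ‖ζ‖ = 1) (hξ : ‖ξ‖ = 1) (r : ℝ) :
    ‖r • ζ - ξ‖ ^ 2 = r ^ 2 - 2 * r * ⟪ζ, ξ⟫ + 1 := by
  rw [norm_sub_sq_real, norm_smul, hζ, hξ, real_inner_smul_left, Real.norm_eq_abs, mul_one,
    sq_abs]
  ring

lemma one_sub_le_norm_smul_sub (hζ : ‖ζ‖ = 1) (hξ : ‖ξ‖ = 1) (hr : 0 ≤ r) :
    1 - r ≤ ‖r • ζ - ξ‖ := by
  simpa [norm_smul_of_norm_eq_one hζ hr, hξ, norm_sub_rev] using norm_sub_norm_le ξ (r • ζ)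

lemma norm_smul_sub_pos (hζ : ‖ζ‖ = 1) (hξ : ‖ξ‖ = 1) (hr : r ∈ Ico 0 1) :
    0 < ‖r • ζ - ξ‖ :=
  (sub_pos.2 hr.2).trans_le (one_sub_le_norm_smul_sub hζ hξ hr.1)

lemma one_sub_mul_norm_smul_sub_le (hζ : ‖ζ‖ = 1) (hξ : ‖ξ‖ = 1) (hr : 0 ≤ r) (hrs : r ≤ s)
    (hs : s ≤ 1) : (1 - s) * ‖r • ζ - ξ‖ ≤ (1 - r) * ‖s • ζ - ξ‖ := by
  have ht : ⟪ζ, ξ⟫ ≤ 1 := by simpa [hζ, hξ] using real_inner_le_norm ζ ξ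
  have hrs1 : r * s ≤ 1 := by nlinarith
  rw [← pow_le_pow_iff_left₀ (mul_nonneg (sub_nonneg.2 hs) (norm_nonneg _))
    (mul_nonneg (sub_nonneg.2 (hrs.trans hs)) (norm_nonneg _)) two_ne_zero, mul_pow, mul_pow,
    norm_smul_sub_sq_of_norm_eq_one hζ hξ, norm_smul_sub_sq_of_norm_eq_one hζ hξ]
  have key : (1 - r) ^ 2 * (s ^ 2 - 2 * s * ⟪ζ, ξ⟫ + 1)
      - (1 - s) ^ 2 * (r ^ 2 - 2 * r * ⟪ζ, ξ⟫ + 1)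
      = 2 * (s - r) * (1 - ⟪ζ, ξ⟫) * (1 - r * s) := by ring
  have : 0 ≤ 2 * (s - r) * (1 - ⟪ζ, ξ⟫) * (1 - r * s) := by
    have := sub_nonneg.2 hrs; have := sub_nonneg.2 ht; have := sub_nonneg.2 hrs1; positivity
  linarith

lemma one_add_mul_norm_smul_sub_le (hζ : ‖ζ‖ = 1) (hξ : ‖ξ‖ = 1) (hr : 0 ≤ r) (hrs : r ≤ s)
    (hs : s ≤ 1) : (1 + r) * ‖s • ζ - ξ‖ ≤ (1 + s) * ‖r • ζ - ξ‖ := by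
  have ht : -1 ≤ ⟪ζ, ξ⟫ := by
    simpa [hζ, hξ] using neg_le_of_abs_le (abs_real_inner_le_norm ζ ξ)
  have hrs1 : r * s ≤ 1 := by nlinarith
  rw [← pow_le_pow_iff_left₀ (by positivity) (by have := hr.trans hrs; positivity) two_ne_zero,
    mul_pow, mul_pow,
    norm_smul_sub_sq_of_norm_eq_one hζ hξ, norm_smul_sub_sq_of_norm_eq_one hζ hξ]
  have key : (1 + s) ^ 2 * (r ^ 2 - 2 * r * ⟪ζ, ξ⟫ + 1)
      - (1 + r) ^ 2 * (s ^ 2 - 2 * s * ⟪ζ, ξ⟫ + 1)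
      = 2 * (s - r) * (1 + ⟪ζ, ξ⟫) * (1 - r * s) := by ring
  have : 0 ≤ 2 * (s - r) * (1 + ⟪ζ, ξ⟫) * (1 - r * s) := by
    have := sub_nonneg.2 hrs; have := neg_le_iff_add_nonneg'.1 ht; have := sub_nonneg.2 hrs1
    positivity
  linarith

lemma antitoneOn_one_sub_div_norm_smul_sub (hζ : ‖ζ‖ = 1) (hξ : ‖ξ‖ = 1) :
    AntitoneOn (fun r ↦ (1 - r) / ‖r • ζ - ξ‖) (Ico 0 1) := fun r hr s hs hrs ↦ by
  rw [div_le_div_iff₀ (norm_smul_sub_pos hζ hξ hs) (norm_smul_sub_pos hζ hξ hr)]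
  exact one_sub_mul_norm_smul_sub_le hζ hξ hr.1 hrs hs.2.le

lemma monotoneOn_one_add_div_norm_smul_sub (hζ : ‖ζ‖ = 1) (hξ : ‖ξ‖ = 1) :
    MonotoneOn (fun r ↦ (1 + r) / ‖r • ζ - ξ‖) (Ico 0 1) := fun r hr s hs hrs ↦ by
  rw [div_le_div_iff₀ (norm_smul_sub_pos hζ hξ hr) (norm_smul_sub_pos hζ hξ hs)]
  exact one_add_mul_norm_smul_sub_le hζ hξ hr.1 hrs hs.2.le

end UnitVectors

section Sphere

variable {E : Type*} [NormedAddCommGroup E] [InnerProductSpace ℝ E] [MeasurableSpace E]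
  (μ : Measure (Metric.sphere (0 : E) 1)) {ζ : E} {r : ℝ}

lemma one_sub_rpow_div_mul_integral_eq (hζ : ‖ζ‖ = 1) (hr : r ∈ Ico 0 1) (α β : ℝ) :
    (1 - r) ^ α / (1 + r) ^ β * ∫ ξ, (1 - ‖r • ζ‖ ^ 2) ^ β / ‖r • ζ - ξ‖ ^ (α + β) ∂μ
      = ∫ ξ, ((1 - r) / ‖r • ζ - ξ‖) ^ (α + β) ∂μ := by
  rw [← integral_const_mul, norm_smul_of_norm_eq_one hζ hr.1]
  refine integral_congr_ae (.of_forall fun ξ ↦ ?_)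
  rw [show (1 : ℝ) - r ^ 2 = (1 - r) * (1 + r) by ring]
  exact rpow_div_rpow_mul_mul_rpow_div_rpow (sub_pos.2 hr.2) (add_pos_of_pos_of_nonneg one_pos hr.1)
    (norm_smul_sub_pos hζ (norm_eq_of_mem_sphere ξ) hr) α β

lemma one_add_rpow_div_mul_integral_eq (hζ : ‖ζ‖ = 1) (hr : r ∈ Ico 0 1) (α β : ℝ) :
    (1 + r) ^ α / (1 - r) ^ β * ∫ ξ, (1 - ‖r • ζ‖ ^ 2) ^ β / ‖r • ζ - ξ‖ ^ (α + β) ∂μ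
      = ∫ ξ, ((1 + r) / ‖r • ζ - ξ‖) ^ (α + β) ∂μ := by
  rw [← integral_const_mul, norm_smul_of_norm_eq_one hζ hr.1]
  refine integral_congr_ae (.of_forall fun ξ ↦ ?_)
  rw [show (1 : ℝ) - r ^ 2 = (1 + r) * (1 - r) by ring]
  exact rpow_div_rpow_mul_mul_rpow_div_rpow (add_pos_of_pos_of_nonneg one_pos hr.1) (sub_pos.2 hr.2)
    (norm_smul_sub_pos hζ (norm_eq_of_mem_sphere ξ) hr) α β

variable [ProperSpace E] [BorelSpace E] [IsFiniteMeasure μ]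

lemma integrable_div_norm_smul_sub_rpow (hζ : ‖ζ‖ = 1) (hr : r ∈ Ico 0 1) {c : ℝ} (hc : c ≠ 0)
    (p : ℝ) : Integrable (fun ξ : Metric.sphere (0 : E) 1 ↦ (c / ‖r • ζ - ξ‖) ^ p) μ := by
  have hD (ξ : Metric.sphere (0 : E) 1) : 0 < ‖r • ζ - ξ‖ :=
    norm_smul_sub_pos hζ (norm_eq_of_mem_sphere ξ) hr
  have hcont : Continuous fun ξ : Metric.sphere (0 : E) 1 ↦ c / ‖r • ζ - ξ‖ :=
    continuous_const.div (continuous_const.sub continuous_subtype_val).norm fun ξ ↦ (hD ξ).ne'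
  exact (hcont.rpow_const fun ξ ↦ .inl (div_ne_zero hc (hD ξ).ne')).integrable_of_hasCompactSupport
    (.of_compactSpace _)

theorem monotoneOn_one_sub_rpow_div_mul_integral (hζ : ‖ζ‖ = 1) {α β : ℝ} (hαβ : α + β ≤ 0) :
    MonotoneOn (fun r ↦ (1 - r) ^ α / (1 + r) ^ β *
      ∫ ξ, (1 - ‖r • ζ‖ ^ 2) ^ β / ‖r • ζ - ξ‖ ^ (α + β) ∂μ) (Ico 0 1) := by
  refine (monotoneOn_integral (fun r hr ↦ integrable_div_norm_smul_sub_rpow μ hζ hr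
    (sub_pos.2 hr.2).ne' _) fun ξ r hr s hs hrs ↦ ?_).congr
    fun r hr ↦ (one_sub_rpow_div_mul_integral_eq μ hζ hr α β).symm
  have hξ := norm_eq_of_mem_sphere ξ
  exact rpow_le_rpow_of_nonpos (div_pos (sub_pos.2 hs.2) (norm_smul_sub_pos hζ hξ hs))
    (antitoneOn_one_sub_div_norm_smul_sub hζ hξ hr hs hrs) hαβ

theorem antitoneOn_one_add_rpow_div_mul_integral (hζ : ‖ζ‖ = 1) {α β : ℝ} (hαβ : α + β ≤ 0) :
    AntitoneOn (fun r ↦ (1 + r) ^ α / (1 - r) ^ β *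
      ∫ ξ, (1 - ‖r • ζ‖ ^ 2) ^ β / ‖r • ζ - ξ‖ ^ (α + β) ∂μ) (Ico 0 1) := by
  refine (antitoneOn_integral (fun r hr ↦ integrable_div_norm_smul_sub_rpow μ hζ hr
    (add_pos_of_pos_of_nonneg one_pos hr.1).ne' _) fun ξ r hr s hs hrs ↦ ?_).congr
    fun r hr ↦ (one_add_rpow_div_mul_integral_eq μ hζ hr α β).symm
  have hξ := norm_eq_of_mem_sphere ξ
  exact rpow_le_rpow_of_nonpos
    (div_pos (add_pos_of_pos_of_nonneg one_pos hr.1) (norm_smul_sub_pos hζ hξ hr))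
    (monotoneOn_one_add_div_norm_smul_sub hζ hξ hr hs hrs) hαβ

end Sphere

theorem stmt10_general (n : ℕ) (l : ℝ) (hl : l < -(n / 2 : ℝ))
    (μ : MeasureTheory.Measure (Metric.sphere (0 : EuclideanSpace ℝ (Fin n)) 1))
    [MeasureTheory.IsFiniteMeasure μ]
    (u : EuclideanSpace ℝ (Fin n) → ℝ)
    (hu : ∀ x, ‖x‖ < 1 →
      u x = ∫ ξ, (1 - ‖x‖ ^ 2) ^ (1 + 2 * l) / ‖x - (ξ : EuclideanSpace ℝ (Fin n))‖ ^ ((n : ℝ) + 2 * l) ∂μ)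
    (ζ : EuclideanSpace ℝ (Fin n)) (hζ : ‖ζ‖ = 1) :
    MonotoneOn (fun r : ℝ => (1 - r) ^ ((n : ℝ) - 1) / (1 + r) ^ (1 + 2 * l) * u (r • ζ))
      (Set.Ico (0:ℝ) 1) ∧
    AntitoneOn (fun r : ℝ => (1 + r) ^ ((n : ℝ) - 1) / (1 - r) ^ (1 + 2 * l) * u (r • ζ))
      (Set.Ico (0:ℝ) 1) := by
  have hexp : (n : ℝ) - 1 + (1 + 2 * l) ≤ 0 := by linarith
  have hu' : ∀ r ∈ Ico (0 : ℝ) 1, u (r • ζ) = ∫ ξ, (1 - ‖r • ζ‖ ^ 2) ^ (1 + 2 * l) /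
      ‖r • ζ - (ξ : EuclideanSpace ℝ (Fin n))‖ ^ ((n : ℝ) - 1 + (1 + 2 * l)) ∂μ := fun r hr ↦ by
    rw [hu _ ((norm_smul_of_norm_eq_one hζ hr.1).trans_lt hr.2),
      show (n : ℝ) - 1 + (1 + 2 * l) = n + 2 * l by ring]
  exact ⟨(monotoneOn_one_sub_rpow_div_mul_integral μ hζ hexp).congr
      fun r hr ↦ by simp only [hu' r hr],
    (antitoneOn_one_add_rpow_div_mul_integral μ hζ hexp).congr fun r hr ↦ by simp only [hu' r hr]⟩

theorem stmt10 (n : ℕ) (hn : 2 ≤ n) (l : ℝ) (hl : l < -(n / 2 : ℝ))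
    (μ : MeasureTheory.Measure (Metric.sphere (0 : EuclideanSpace ℝ (Fin n)) 1))
    [MeasureTheory.IsFiniteMeasure μ]
    (u : EuclideanSpace ℝ (Fin n) → ℝ)
    (hu : ∀ x, ‖x‖ < 1 →
      u x = ∫ ξ, (1 - ‖x‖ ^ 2) ^ (1 + 2 * l) / ‖x - (ξ : EuclideanSpace ℝ (Fin n))‖ ^ ((n : ℝ) + 2 * l) ∂μ)
    (ζ : EuclideanSpace ℝ (Fin n)) (hζ : ‖ζ‖ = 1) :
    MonotoneOn (fun r : ℝ => (1 - r) ^ ((n : ℝ) - 1) / (1 + r) ^ (1 + 2 * l) * u (r • ζ))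
      (Set.Ico (0:ℝ) 1) ∧
    AntitoneOn (fun r : ℝ => (1 + r) ^ ((n : ℝ) - 1) / (1 - r) ^ (1 + 2 * l) * u (r • ζ))
      (Set.Ico (0:ℝ) 1) :=
  stmt10_general n l hl μ u hu ζ hζ
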